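/- Define p_1 = 5 and p_{j+1} = 6·∏_{k ≤ j} (p_k² + 2p_k) - 1. Then for all j > k: p_j is odd, p_j ≡ -1 (mod p_k), and p_j ≡ -1 (mod p_k + 2); consequently gcd(p_j, p_k) = gcd(p_j, p_k+2) = gcd(p_j+2, p_k) = gcd(p_j+2, p_k+2) = 1 and both p_j and p_j + 2 are odd. -/
import Mathlib


/-- The sequence `p₁ = 5`, `p_{j+1} = 6·∏_{k ≤ j} (p_k² + 2p_k) - 1` from Example 3.4,
indexed from 0 (so `paperP 0 = p₁ = 5`). -/
def paperP : ℕ → ℕ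
  | 0 => 5
  | j + 1 => 6 * (∏ k ∈ (Finset.range (j + 1)).attach, (paperP k.1 ^ 2 + 2 * paperP k.1)) - 1
termination_by j => j
decreasing_by exact Finset.mem_range.mp k.2

lemma paperP_succ (j : ℕ) :
    paperP (j + 1) = 6 * (∏ k ∈ Finset.range (j + 1), (paperP k ^ 2 + 2 * paperP k)) - 1 := by
  rw [paperP]
  congr 1
  exact congrArg (6 * ·) (Finset.prod_attach _ fun k => paperP k ^ 2 + 2 * paperP k)

lemma paperP_pos (j : ℕ) : 1 ≤ paperP j := by
  induction j using Nat.strong_induction_on with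
  | _ j ih =>
    cases j with
    | zero => simp [paperP]
    | succ m =>
      rw [paperP_succ]
      have hprod : 1 ≤ ∏ k ∈ Finset.range (m + 1), (paperP k ^ 2 + 2 * paperP k) := by
        apply Finset.one_le_prod'
        intro k hk
        have := ih k (Finset.mem_range.mp hk)
        nlinarith
      omega

lemma paperP_succ_add_one (j : ℕ) :
    paperP (j + 1) + 1 = 6 * (∏ k ∈ Finset.range (j + 1), (paperP k ^ 2 + 2 * paperP k)) := by
  have h := paperP_succ j
  have h1 := paperP_pos (j + 1)
  omega

lemma gcd_one_of_dvd_succ {a c : ℕ} (h : c ∣ a + 1) : Nat.gcd a c = 1 := by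
  have h1 : Nat.gcd a c ∣ a := Nat.gcd_dvd_left _ _
  have h2 : Nat.gcd a c ∣ a + 1 := (Nat.gcd_dvd_right _ _).trans h
  have h3 := Nat.dvd_sub h2 h1
  simpa using h3

lemma gcd_one_of_dvd_succ' {a c : ℕ} (h : c ∣ a + 1) : Nat.gcd (a + 2) c = 1 := by
  have h1 : Nat.gcd (a + 2) c ∣ a + 2 := Nat.gcd_dvd_left _ _
  have h2 : Nat.gcd (a + 2) c ∣ a + 1 := (Nat.gcd_dvd_right _ _).trans h
  have h3 := Nat.dvd_sub h1 h2
  simpa using h3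

theorem paperP_properties :
    (paperP 0 = 5 ∧ ∀ j : ℕ,
        paperP (j + 1) = 6 * (∏ k ∈ Finset.range (j + 1), (paperP k ^ 2 + 2 * paperP k)) - 1) ∧
    ∀ j k : ℕ, k < j →
      Odd (paperP j) ∧ Odd (paperP j + 2) ∧
      paperP k ∣ paperP j + 1 ∧ (paperP k + 2) ∣ paperP j + 1 ∧
      Nat.gcd (paperP j) (paperP k) = 1 ∧ Nat.gcd (paperP j) (paperP k + 2) = 1 ∧
      Nat.gcd (paperP j + 2) (paperP k) = 1 ∧ Nat.gcd (paperP j + 2) (paperP k + 2) = 1 := by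
  refine ⟨⟨by rw [paperP], paperP_succ⟩, ?_⟩
  intro j k hkj
  obtain ⟨m, rfl⟩ : ∃ m, j = m + 1 := ⟨j - 1, by omega⟩
  have hdvd1 : paperP k ∣ paperP (m + 1) + 1 := by
    rw [paperP_succ_add_one]
    refine Dvd.dvd.mul_left ?_ 6
    have hmem : k ∈ Finset.range (m + 1) := Finset.mem_range.mpr (by omega)
    have := Finset.dvd_prod_of_mem (fun k => paperP k ^ 2 + 2 * paperP k) hmem
    exact dvd_trans ⟨paperP k + 2, by ring⟩ this
  have hdvd2 : paperP k + 2 ∣ paperP (m + 1) + 1 := by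
    rw [paperP_succ_add_one]
    refine Dvd.dvd.mul_left ?_ 6
    have hmem : k ∈ Finset.range (m + 1) := Finset.mem_range.mpr (by omega)
    have := Finset.dvd_prod_of_mem (fun k => paperP k ^ 2 + 2 * paperP k) hmem
    exact dvd_trans ⟨paperP k, by ring⟩ this
  have hodd : Odd (paperP (m + 1)) := by
    have h := paperP_succ_add_one m
    refine ⟨3 * (∏ k ∈ Finset.range (m + 1), (paperP k ^ 2 + 2 * paperP k)) - 1, by omega⟩
  obtain ⟨t, ht⟩ := hodd
  exact ⟨⟨t, by omega⟩, ⟨t + 1, by omega⟩, hdvd1, hdvd2,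
    gcd_one_of_dvd_succ hdvd1, gcd_one_of_dvd_succ hdvd2,
    gcd_one_of_dvd_succ' hdvd1, gcd_one_of_dvd_succ' hdvd2⟩
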